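/- Let F be a probability measure on ℝ that assigns probability 1 to the interval [u, v] and has finite mean, let γ ∈ (0,1), let v' > v, and let U denote the uniform probability distribution on the interval (v, v']. Define the mixture F' = (1 − γ)·F + γ·U. Then the Kullback–Leibler divergence satisfies D(F, F') = −log(1 − γ), and the mean of F' equals (1 − γ)·μ(F) + (γ/2)·(v + v'). -/

import Mathlib

open MeasureTheory Real Classical

/-- Kullback–Leibler divergence between measures on ℝ, as an extended real:
`∫ log(dF/dF') dF` when `F ≪ F'`, and `⊤` otherwise. -/
noncomputable def klDivergence (F F' : Measure ℝ) : EReal :=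
  if F ≪ F' then ((∫ x, Real.log (F.rnDeriv F' x).toReal ∂F : ℝ) : EReal) else ⊤

/-- The uniform probability distribution on the interval `(v, v']`. -/
noncomputable def uniformOnIoc (v v' : ℝ) : Measure ℝ :=
  (ENNReal.ofReal (v' - v))⁻¹ • (volume.restrict (Set.Ioc v v'))

/-! Since `F` lives on `(-∞, v]` and `U` on `(v, v']`, the two components of `F'` are mutually
singular, so `dF/dF' = (1 - γ)⁻¹` holds `F`-almost everywhere and the divergence is the integral
of a constant. The mean is linear in the measure, and `U` has mean `(v + v') / 2`. -/

open scoped ENNReal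

namespace MeasureTheory.Measure

variable {α : Type*} [MeasurableSpace α] {μ ν : Measure α} {c : ℝ≥0∞}

lemma rnDeriv_smul_add_of_mutuallySingular [SigmaFinite μ] [SigmaFinite ν] (h : μ ⟂ₘ ν)
    (hc0 : c ≠ 0) (hc : c ≠ ∞) :
    μ.rnDeriv (c • μ + ν) =ᵐ[μ] fun _ => c⁻¹ := by
  have : SigmaFinite (c • μ) := by
    lift c to NNReal using hc
    exact SMul.sigmaFinite c
  have h_add : μ.rnDeriv (c • μ + ν) =ᵐ[μ] μ.rnDeriv (c • μ) :=
    (absolutelyContinuous_smul hc0).ae_le (rnDeriv_add_right_of_mutuallySingular (h.smul c))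
  filter_upwards [h_add, rnDeriv_smul_right_of_ne_top' μ μ hc0 hc, μ.rnDeriv_self]
    with x h_add h_smul h_self
  rw [h_add, h_smul, Pi.smul_apply, h_self, smul_eq_mul, mul_one]

end MeasureTheory.Measure

lemma klDivergence_smul_add_of_mutuallySingular {μ ν : Measure ℝ} [IsProbabilityMeasure μ]
    [SigmaFinite ν] (h : μ ⟂ₘ ν) {c : ℝ≥0∞} (hc0 : c ≠ 0) (hc : c ≠ ∞) :
    klDivergence μ (c • μ + ν) = ((-Real.log c.toReal : ℝ) : EReal) := by
  have hac : μ ≪ c • μ + ν := (Measure.absolutelyContinuous_smul hc0).add_right ν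
  rw [klDivergence, if_pos hac,
    integral_congr_ae ((Measure.rnDeriv_smul_add_of_mutuallySingular h hc0 hc).mono
      fun x hx => congrArg (fun r => Real.log (ENNReal.toReal r)) hx)]
  simp [ENNReal.toReal_inv, Real.log_inv]

lemma mutuallySingular_uniformOnIoc {μ : Measure ℝ} {v : ℝ} (h : μ (Set.Ioi v) = 0) (v' : ℝ) :
    μ ⟂ₘ uniformOnIoc v v' := by
  refine ⟨Set.Ioi v, measurableSet_Ioi, h, ?_⟩
  rw [uniformOnIoc, Measure.smul_apply, Measure.restrict_apply measurableSet_Ioi.compl,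
    Set.compl_Ioi, (Set.Iic_disjoint_Ioc le_rfl).inter_eq]
  simp

lemma isProbabilityMeasure_uniformOnIoc {v v' : ℝ} (hv : v < v') :
    IsProbabilityMeasure (uniformOnIoc v v') := by
  constructor
  rw [uniformOnIoc, Measure.smul_apply, Measure.restrict_apply_univ, Real.volume_Ioc,
    smul_eq_mul, ENNReal.inv_mul_cancel (by simpa using hv) ENNReal.ofReal_ne_top]

lemma integrable_id_uniformOnIoc {v v' : ℝ} (hv : v < v') :
    Integrable (fun x => x) (uniformOnIoc v v') :=
  continuous_id.integrableOn_Ioc.integrable.smul_measure (by simpa using hv)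

lemma integral_id_uniformOnIoc {v v' : ℝ} (hv : v < v') :
    ∫ x, x ∂uniformOnIoc v v' = (v + v') / 2 := by
  have hvv : 0 < v' - v := sub_pos.mpr hv
  rw [uniformOnIoc, integral_smul_measure, ← intervalIntegral.integral_of_le hv.le, integral_id,
    ENNReal.toReal_inv, ENNReal.toReal_ofReal hvv.le, smul_eq_mul]
  field_simp
  ring

theorem kl_and_mean_of_uniform_mixture
    (F : Measure ℝ) [IsProbabilityMeasure F]
    (u v v' : ℝ) (hF : F (Set.Icc u v) = 1)
    (hInt : Integrable (fun x => x) F)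
    (γ : ℝ) (hγ0 : 0 < γ) (hγ1 : γ < 1) (hv : v < v') :
    klDivergence F ((ENNReal.ofReal (1 - γ)) • F
        + (ENNReal.ofReal γ) • uniformOnIoc v v') = ((-Real.log (1 - γ) : ℝ) : EReal)
    ∧ (∫ x, x ∂((ENNReal.ofReal (1 - γ)) • F + (ENNReal.ofReal γ) • uniformOnIoc v v'))
        = (1 - γ) * (∫ x, x ∂F) + γ / 2 * (v + v') := by
  have hγ1' : 0 < 1 - γ := sub_pos.mpr hγ1
  have := isProbabilityMeasure_uniformOnIoc hv
  have := (uniformOnIoc v v').smul_finite (ENNReal.ofReal_ne_top (r := γ))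
  have hFv : F (Set.Ioi v) = 0 :=
    measure_mono_null (fun x (hx : v < x) (hx' : x ∈ Set.Icc u v) => hx.not_ge hx'.2)
      (prob_compl_eq_zero_iff measurableSet_Icc |>.mpr hF)
  refine ⟨?_, ?_⟩
  · rw [klDivergence_smul_add_of_mutuallySingular
      ((mutuallySingular_uniformOnIoc hFv v').symm.smul _).symm (by simpa using hγ1)
      ENNReal.ofReal_ne_top, ENNReal.toReal_ofReal hγ1'.le]
  · rw [integral_add_measure (hInt.smul_measure ENNReal.ofReal_ne_top)
      ((integrable_id_uniformOnIoc hv).smul_measure ENNReal.ofReal_ne_top),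
      integral_smul_measure, integral_smul_measure, integral_id_uniformOnIoc hv,
      ENNReal.toReal_ofReal hγ1'.le, ENNReal.toReal_ofReal hγ0.le, smul_eq_mul, smul_eq_mul]
    ring
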